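/- Unsoundness of the strawperson procedure: there exists a network instance and an interface A satisfying the strawperson check (for every node v with in-neighbors u₁,…,u_k: for all s_i ∈ A(u_i), the merge of init v with the transferred routes lies in A(v)) such that some stable state of the simulation is not contained in A; concretely, in the running example with interfaces A(n) = ⊤, A(w) = {s : s.lp = 100}, A(v) = A(d) = {s : s.lp = 200 ∧ ¬s.tag}, A(e) = {none}, the strawperson check passes at every node, but the simulation's converged state at v, some (100, 1, true), is not in A(v). -/
import Mathlib


/-- A network instance: in-neighbors, initial routes, edge transfer functions
and a merge (selection) function. -/
structure Network (V : Type) (S : Type) where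
  pred : V → List V
  init : V → S
  T : V → V → S → S
  merge : S → S → S

/-- The route computed at `v` from neighbor states `s`:
`init v` merged with the transferred routes of the in-neighbors. -/
def mergedState {V S : Type} (N : Network V S) (v : V) (s : V → S) : S :=
  (N.pred v).foldr (fun u acc => N.merge (N.T u v (s u)) acc) (N.init v)

/-- The synchronous simulation state. -/
def sim {V S : Type} (N : Network V S) : ℕ → V → S
  | 0, v => N.init v
  | t + 1, v => mergedState N v (sim N t)

/-- Initial verification condition. -/
def InitCond {V S : Type} (N : Network V S) (A : V → ℕ → Set S) : Prop :=
  ∀ v, N.init v ∈ A v 0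

/-- Inductive verification condition. -/
def IndCond {V S : Type} (N : Network V S) (A : V → ℕ → Set S) : Prop :=
  ∀ v (t : ℕ) (s : V → S), (∀ u ∈ N.pred v, s u ∈ A u t) →
    mergedState N v s ∈ A v (t + 1)

/-- Nodes of the running five-node example network. -/
inductive Node | n | w | v | d | e
deriving DecidableEq

/-- A concrete route record: local preference, path length, internal tag. -/
structure R where
  lp : ℕ
  len : ℕ
  tag : Bool
deriving DecidableEq

/-- Routes are optional records; `none` is the absence of a route. -/
abbrev Route := Option R

/-- Increment path length across an edge. -/
def incr (r : Route) : Route := r.map fun x => { x with len := x.len + 1 }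

/-- Edge transfer functions: every edge increments `len`; `wv` sets the tag;
`nv` drops all routes; `de` drops untagged routes. -/
def transfer : Node → Node → Route → Route
  | .n, .v, _ => none
  | .w, .v, r => (incr r).map fun x => { x with tag := true }
  | .d, .e, r =>
      match incr r with
      | some x => if x.tag then some x else none
      | none => none
  | _, _, r => incr r

/-- Merge: `none` is identity; prefer higher local preference, then shorter length. -/
def rmerge : Route → Route → Route
  | none, b => b
  | some a, none => some a
  | some a, some b =>
      if b.lp < a.lp then some a
      else if a.lp < b.lp then some b
      else if a.len ≤ b.len then some a else some b

/-- In-neighbors: edges nv, wv, vd, dv, de. -/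
def epreds : Node → List Node
  | .v => [.n, .w, .d]
  | .d => [.v]
  | .e => [.d]
  | _ => []

/-- Initial routes: `w` has a route with lp 100; all others have none. -/
def exInit : Node → Route
  | .w => some ⟨100, 0, false⟩
  | _ => none

/-- The running example network instance. -/
def exNet : Network Node Route := ⟨epreds, exInit, transfer, rmerge⟩

/-- The (unsound) strawperson check: one time-free local step per node. -/
def StrawCheck {V S : Type} (N : Network V S) (A : V → Set S) : Prop :=
  ∀ v (s : V → S), (∀ u ∈ N.pred v, s u ∈ A u) → mergedState N v s ∈ A v

/-- The bad interfaces from the running example. -/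
def A12 : Node → Set Route
  | .n => Set.univ
  | .w => {s | ∃ r, s = some r ∧ r.lp = 100}
  | .v => {s | ∃ r, s = some r ∧ r.lp = 200 ∧ r.tag = false}
  | .d => {s | ∃ r, s = some r ∧ r.lp = 200 ∧ r.tag = false}
  | .e => {none}


def Ffix : Node → Route
  | .n => none
  | .w => some ⟨100, 0, false⟩
  | .v => some ⟨100, 1, true⟩
  | .d => some ⟨100, 2, true⟩
  | .e => some ⟨100, 3, true⟩

lemma fix_step : ∀ x, mergedState exNet x Ffix = Ffix x := by
  intro x; cases x <;> rfl

lemma sim3_eq : sim exNet 3 = Ffix := by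
  funext x; cases x <;> rfl

lemma sim_ge3 : ∀ t, sim exNet (t + 3) = Ffix := by
  intro t
  induction t with
  | zero => exact sim3_eq
  | succ n ih =>
      funext x
      show mergedState exNet x (sim exNet (n + 3)) = Ffix x
      rw [ih]; exact fix_step x

/-- Unsoundness of the strawperson procedure: the check passes at every node,
yet the converged simulation state at v, some (100, 1, true), is excluded. -/
theorem strawperson_unsound :
    StrawCheck exNet A12 ∧
    (∀ t : ℕ, 1 ≤ t → sim exNet t Node.v = some ⟨100, 1, true⟩) ∧
    some (⟨100, 1, true⟩ : R) ∉ A12 Node.v := by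
  refine ⟨?_, ?_, ?_⟩
  · intro v s h
    cases v with
    | n => trivial
    | w => exact ⟨⟨100, 0, false⟩, rfl, rfl⟩
    | v =>
        obtain ⟨rw, hw, hwlp⟩ := h .w (by simp [exNet, epreds])
        obtain ⟨rd, hd, hdlp, hdtag⟩ := h .d (by simp [exNet, epreds])
        refine ⟨⟨200, rd.len + 1, false⟩, ?_, rfl, rfl⟩
        simp [mergedState, exNet, epreds, transfer, incr, rmerge, exInit, hw, hd, hwlp, hdlp, hdtag]
    | d =>
        obtain ⟨rv, hv, hvlp, hvtag⟩ := h .v (by simp [exNet, epreds])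
        refine ⟨⟨200, rv.len + 1, false⟩, ?_, rfl, rfl⟩
        simp [mergedState, exNet, epreds, transfer, incr, rmerge, exInit, hv, hvlp, hvtag]
    | e =>
        obtain ⟨rd, hd, hdlp, hdtag⟩ := h .d (by simp [exNet, epreds])
        simp [mergedState, exNet, epreds, transfer, incr, rmerge, hd, hdtag]
        rfl
  · intro t ht
    match t, ht with
    | 1, _ => rfl
    | 2, _ => rfl
    | (n + 3), _ => rw [sim_ge3 n]; rfl
  · rintro ⟨r, hr, hlp, -⟩
    cases hr
    simp at hlp
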